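/- arXiv:1204.6279 — 3 statements merged into one kernel-verified Lean document; each statement's English description precedes it below -/
import Mathlib

section
/- There exists a unique function f : [0, +∞) → ℝ such that f(0) = 1 and f(u·tanh u) = (tanh u)/u for every u > 0; moreover 0 < f(t) ≤ 1 for every t ≥ 0. -/
/-!
The map `u ↦ u * tanh u` is continuous and strictly increasing on `[0, ∞)`, vanishes at `0` and
tends to `∞`, hence is a bijection of `[0, ∞)` onto itself. Any admissible `f` therefore equals
`tanhc ∘ (u ↦ u * tanh u)⁻¹`, where `tanhc u = tanh u / u` is extended by `1` at `0`.
The bounds `0 < tanhc ≤ 1` hold because `tanh` has the sign of its argument and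
`|tanh u| ≤ |u|`; the latter amounts to `sinh u ≤ u * cosh u`, true since `u * cosh u - sinh u` has derivative
`u * sinh u ≥ 0` on `[0, ∞)`.
-/

open Set Filter

namespace Real

variable {x : ℝ}

theorem tanh_strictMono : StrictMono tanh := fun a b hab => by
  have hmem : ∀ y, tanh y ∈ Ioo (-1 : ℝ) 1 := fun y => ⟨neg_one_lt_tanh y, tanh_lt_one y⟩
  rwa [← artanh_lt_artanh_iff (hmem a) (hmem b), artanh_tanh, artanh_tanh]

theorem tanh_pos_iff : 0 < tanh x ↔ 0 < x := by
  simpa only [tanh_zero] using tanh_strictMono.lt_iff_lt (a := 0) (b := x)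

theorem tanh_nonneg_iff : 0 ≤ tanh x ↔ 0 ≤ x := by
  simpa only [tanh_zero] using tanh_strictMono.le_iff_le (a := 0) (b := x)

theorem tanh_lt_zero_iff : tanh x < 0 ↔ x < 0 := by
  simpa only [tanh_zero] using tanh_strictMono.lt_iff_lt (a := x) (b := 0)

@[fun_prop]
theorem continuous_tanh : Continuous tanh := by
  simp only [funext tanh_eq_sinh_div_cosh]
  exact continuous_sinh.div continuous_cosh fun y => (cosh_pos y).ne'

theorem abs_tanh (x : ℝ) : |tanh x| = tanh |x| := by
  rcases le_total 0 x with hx | hx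
  · rw [abs_of_nonneg hx, abs_of_nonneg (tanh_nonneg_iff.2 hx)]
  · rw [abs_of_nonpos hx, ← abs_neg, ← tanh_neg,
      abs_of_nonneg (tanh_nonneg_iff.2 (neg_nonneg.2 hx))]

theorem sinh_le_mul_cosh (hx : 0 ≤ x) : sinh x ≤ x * cosh x := by
  have hmono : MonotoneOn (fun y => y * cosh y - sinh y) (Ici 0) := by
    refine monotoneOn_of_hasDerivWithinAt_nonneg (f' := fun y => y * sinh y) (convex_Ici 0)
      (by fun_prop) (fun y _ => ?_) (fun y hy => ?_)
    · have := ((hasDerivAt_id y).mul (hasDerivAt_cosh y)).sub (hasDerivAt_sinh y)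
      exact (this.congr_deriv (by simp)).hasDerivWithinAt
    · rw [interior_Ici] at hy
      exact mul_nonneg (le_of_lt hy) (sinh_pos_iff.2 hy).le
  simpa using hmono self_mem_Ici hx hx

theorem tanh_le_self (hx : 0 ≤ x) : tanh x ≤ x := by
  rw [tanh_eq_sinh_div_cosh, div_le_iff₀ (cosh_pos x)]
  exact sinh_le_mul_cosh hx

theorem abs_tanh_le_abs (x : ℝ) : |tanh x| ≤ |x| :=
  abs_tanh x ▸ tanh_le_self (abs_nonneg x)

noncomputable def tanhc (x : ℝ) : ℝ := if x = 0 then 1 else tanh x / x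

@[simp]
theorem tanhc_zero : tanhc 0 = 1 := by simp [tanhc]

theorem tanhc_of_ne_zero (hx : x ≠ 0) : tanhc x = tanh x / x := by simp [tanhc, hx]

theorem tanhc_pos (x : ℝ) : 0 < tanhc x := by
  rcases lt_trichotomy x 0 with hx | rfl | hx
  · rw [tanhc_of_ne_zero hx.ne]
    exact div_pos_of_neg_of_neg (tanh_lt_zero_iff.2 hx) hx
  · simp
  · rw [tanhc_of_ne_zero hx.ne']
    exact div_pos (tanh_pos_iff.2 hx) hx

theorem tanhc_le_one (x : ℝ) : tanhc x ≤ 1 := by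
  by_cases hx : x = 0
  · simp [hx]
  rw [tanhc_of_ne_zero hx]
  calc tanh x / x ≤ |tanh x| / |x| := abs_div (tanh x) x ▸ le_abs_self _
    _ ≤ 1 := div_le_one_of_le₀ (abs_tanh_le_abs x) (abs_nonneg x)

theorem strictMonoOn_mul_tanh : StrictMonoOn (fun u => u * tanh u) (Ici 0) := by
  intro a ha b _ hab
  have htanh_lt : tanh a < tanh b := tanh_strictMono hab
  have htanh_pos : 0 < tanh b := tanh_pos_iff.2 (lt_of_le_of_lt ha hab)
  dsimp only
  nlinarith [mem_Ici.1 ha]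

theorem tendsto_mul_tanh_atTop : Tendsto (fun u => u * tanh u) atTop atTop := by
  refine tendsto_atTop_mono' atTop ?_ (tendsto_id.atTop_mul_const (tanh_pos_iff.2 one_pos))
  filter_upwards [eventually_ge_atTop 1] with u hu
  exact mul_le_mul_of_nonneg_left (tanh_strictMono.monotone hu) (zero_le_one.trans hu)

theorem bijOn_mul_tanh : BijOn (fun u => u * tanh u) (Ici 0) (Ici 0) := by
  refine ⟨fun u hu => mul_nonneg hu (tanh_nonneg_iff.2 hu), strictMonoOn_mul_tanh.injOn, ?_⟩
  simpa [SurjOn] using intermediate_value_Ici (a := (0 : ℝ)) (by fun_prop) tendsto_mul_tanh_atTop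

theorem tanhc_eq_of_mul_tanh {g : ℝ → ℝ} (hg0 : g 0 = 1)
    (hg : ∀ u : ℝ, 0 < u → g (u * tanh u) = tanh u / u) {u : ℝ} (hu : 0 ≤ u) :
    g (u * tanh u) = tanhc u := by
  rcases hu.eq_or_lt with rfl | hu
  · simpa using hg0
  · rw [hg u hu, tanhc_of_ne_zero hu.ne']

end Real

open Real

/-- There is a unique function `f : [0,∞) → ℝ` with `f 0 = 1` and
`f (u * tanh u) = tanh u / u` for every `u > 0`; moreover `0 < f t ≤ 1` for every `t ≥ 0`.
(We model `f` as a function on `ℝ`, unique on `[0, ∞)`.) -/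
theorem exists_unique_f :
    ∃ f : ℝ → ℝ,
      (f 0 = 1 ∧ ∀ u : ℝ, 0 < u → f (u * Real.tanh u) = Real.tanh u / u) ∧
      (∀ t : ℝ, 0 ≤ t → 0 < f t ∧ f t ≤ 1) ∧
      (∀ g : ℝ → ℝ,
        (g 0 = 1 ∧ ∀ u : ℝ, 0 < u → g (u * Real.tanh u) = Real.tanh u / u) →
        ∀ t : ℝ, 0 ≤ t → g t = f t) := by
  set ψ := Function.invFunOn (fun u => u * tanh u) (Ici 0)
  have hψφ : LeftInvOn ψ (fun u => u * tanh u) (Ici 0) := bijOn_mul_tanh.injOn.leftInvOn_invFunOn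
  have hφψ : RightInvOn ψ (fun u => u * tanh u) (Ici 0) :=
    bijOn_mul_tanh.surjOn.rightInvOn_invFunOn
  refine ⟨tanhc ∘ ψ, ⟨?_, fun u hu => ?_⟩, fun t _ => ⟨tanhc_pos _, tanhc_le_one _⟩,
    fun g ⟨hg0, hg⟩ t ht => ?_⟩
  · simpa using congrArg tanhc (hψφ self_mem_Ici)
  · rw [Function.comp_apply, hψφ (mem_Ici.2 hu.le), tanhc_of_ne_zero hu.ne']
  · have hψt : ψ t ∈ Ici 0 := bijOn_mul_tanh.surjOn.mapsTo_invFunOn ht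
    exact (congrArg g (hφψ ht)).symm.trans (tanhc_eq_of_mul_tanh hg0 hg hψt)
end

section
/- For every integer d ≥ 3, the function p ↦ 1/ε(p) is Lebesgue integrable on the cube (−π,π]^d ⊂ ℝ^d; equivalently, θ(d) = (2π)^{−d} ∫_{(−π,π]^d} (1/ε(p)) dp is finite. -/
/-!
For `|x| ≤ π` one has `1 - cos x ≥ (2/π²) x²`, so on the cube `ε(p) ≥ (2/π²) ‖p‖²` and
`1/ε(p) ≤ (π²/2) ‖p‖⁻²`. The power `‖p‖⁻²` is integrable on balls of `ℝ^d` once `2 < d`.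
-/

open MeasureTheory Real

lemma MeasureTheory.integrableOn_ball_norm_rpow_neg {E : Type*} [NormedAddCommGroup E]
    [NormedSpace ℝ E] [FiniteDimensional ℝ E] [MeasurableSpace E] [BorelSpace E]
    {μ : Measure E} [μ.IsAddHaarMeasure] (hd : 1 ≤ Module.finrank ℝ E) {α : ℝ}
    (hα : α < Module.finrank ℝ E) (r : ℝ) :
    IntegrableOn (fun x : E => ‖x‖ ^ (-α)) (Metric.ball 0 r) μ :=
  integrableOn_ball_of_norm_le_rpow (C := 1) hd hα
    (ae_of_all _ fun x => by rw [one_mul, norm_of_nonneg (rpow_nonneg (norm_nonneg x) _)])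
    (measurable_norm.pow_const _).aestronglyMeasurable

section SumOneSubCos

variable {ι : Type*} [Fintype ι]

lemma sum_one_sub_cos_nonneg (p : ι → ℝ) : 0 ≤ ∑ i, (1 - cos (p i)) :=
  Finset.sum_nonneg fun i _ => sub_nonneg.2 (cos_le_one (p i))

lemma mul_sq_norm_le_sum_one_sub_cos {p : ι → ℝ} (hp : ∀ i, |p i| ≤ π) :
    2 / π ^ 2 * ‖p‖ ^ 2 ≤ ∑ i, (1 - cos (p i)) := by
  set ε := ∑ i, (1 - cos (p i))
  have hcoord (i : ι) : p i ^ 2 ≤ π ^ 2 / 2 * ε := by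
    have hterm : 1 - cos (p i) ≤ ε :=
      Finset.single_le_sum (f := fun j => 1 - cos (p j))
        (fun j _ => sub_nonneg.2 (cos_le_one (p j))) (Finset.mem_univ i)
    have hcos := cos_le_one_sub_mul_cos_sq (hp i)
    have hcancel : 2 / π ^ 2 * p i ^ 2 * (π ^ 2 / 2) = p i ^ 2 := by field_simp
    nlinarith [pi_pos]
  have hε : 0 ≤ π ^ 2 / 2 * ε := by have := sum_one_sub_cos_nonneg p; positivity
  have hnorm : ‖p‖ ≤ √(π ^ 2 / 2 * ε) :=
    (pi_norm_le_iff_of_nonneg (sqrt_nonneg _)).2 fun i => abs_le_sqrt (hcoord i)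
  calc 2 / π ^ 2 * ‖p‖ ^ 2 ≤ 2 / π ^ 2 * (π ^ 2 / 2 * ε) := by
        gcongr; exact (le_sqrt (norm_nonneg p) hε).1 hnorm
    _ = ε := by field_simp

lemma inv_sum_one_sub_cos_le {p : ι → ℝ} (hp : ∀ i, |p i| ≤ π) :
    (∑ i, (1 - cos (p i)))⁻¹ ≤ π ^ 2 / 2 * ‖p‖ ^ (-2 : ℝ) := by
  rcases eq_or_ne p 0 with rfl | hp0
  · simp
  have hpos : 0 < 2 / π ^ 2 * ‖p‖ ^ 2 := by have := norm_pos_iff.2 hp0; positivity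
  calc (∑ i, (1 - cos (p i)))⁻¹ ≤ (2 / π ^ 2 * ‖p‖ ^ 2)⁻¹ :=
        inv_anti₀ hpos (mul_sq_norm_le_sum_one_sub_cos hp)
    _ = π ^ 2 / 2 * ‖p‖ ^ (-2 : ℝ) := by
        rw [rpow_neg (norm_nonneg p), rpow_two, mul_inv, inv_div]

end SumOneSubCos

/-- For every integer `d ≥ 3`, the function `p ↦ 1/ε(p)`, with
`ε(p) = ∑ᵢ (1 - cos pᵢ)`, is Lebesgue integrable on the cube `(-π, π]^d ⊂ ℝ^d`. -/
theorem inv_eps_integrableOn (d : ℕ) (hd : 3 ≤ d) :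
    IntegrableOn (fun p : Fin d → ℝ => (∑ i, (1 - Real.cos (p i)))⁻¹)
      (Set.univ.pi fun _ : Fin d => Set.Ioc (-Real.pi) Real.pi) volume := by
  set Q := Set.univ.pi fun _ : Fin d => Set.Ioc (-π) π
  have hQ : MeasurableSet Q := MeasurableSet.univ_pi fun _ => measurableSet_Ioc
  have habs (p : Fin d → ℝ) (hp : p ∈ Q) (i : Fin d) : |p i| ≤ π :=
    abs_le.2 ⟨(hp i trivial).1.le, (hp i trivial).2⟩
  have hQ_ball : Q ⊆ Metric.ball 0 4 := fun p hp => by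
    rw [mem_ball_zero_iff, pi_norm_lt_iff four_pos]
    exact fun i => (habs p hp i).trans_lt pi_lt_four
  have hfinrank : Module.finrank ℝ (Fin d → ℝ) = d := Module.finrank_fin_fun ℝ
  have hdom : IntegrableOn (fun p : Fin d → ℝ => π ^ 2 / 2 * ‖p‖ ^ (-2 : ℝ)) Q :=
    IntegrableOn.mono_set (Integrable.const_mul (integrableOn_ball_norm_rpow_neg
      (by omega) (by rw [hfinrank]; exact_mod_cast hd) 4) _) hQ_ball
  have hmeas : Measurable fun p : Fin d → ℝ => (∑ i, (1 - cos (p i)))⁻¹ :=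
    Measurable.inv (by fun_prop)
  refine hdom.mono' hmeas.aestronglyMeasurable (ae_restrict_of_forall_mem hQ fun p hp => ?_)
  rw [norm_of_nonneg (inv_nonneg.2 (sum_one_sub_cos_nonneg p))]
  exact inv_sum_one_sub_cos_le (habs p hp)
end

section
/- Let d ≥ 3 be an integer, ν, J > 0, and fix x, y ∈ ℤ^d. Then, as L → ∞, (2L)^{−d} Σ_{p ∈ Λ*_L, p ≠ 0} (ν/(2Jε(p)))·cos((p, x−y)) converges to (2π)^{−d} ∫_{(−π,π]^d} (ν/(2Jε(p)))·cos((p, x−y)) dp. -/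
/-!
Up to the factor `(2π)^{-d}`, the Brillouin sum is the integral over the box `(-π, π]^d` of the
step function that equals the summand at the upper corner of each cube of side `π / L` (and `0`
on the cube whose corner is the origin). Away from the origin these step functions converge
pointwise to the integrand. A nonzero grid point `q` is at distance at least `π / L` from the
origin and within `π / L` of every point `p` of its cube, so `‖p‖ ≤ 2 ‖q‖`; together with
`ε(q) ≥ 2 ‖q‖² / π²` on the box this dominates the step functions by a multiple of `‖p‖⁻²`,
which is integrable near the origin exactly when `d ≥ 3`. Dominated convergence concludes.
-/

open MeasureTheory Real Filter Set Topology
open scoped Classical Function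

namespace Brillouin

variable {d : ℕ}

noncomputable section

def box (d : ℕ) : Set (Fin d → ℝ) := univ.pi fun _ => Ioc (-π) π

def node (L : ℕ) (k : ℝ) : ℝ := -π + π * k / L

def gridPoint (L : ℕ) (s : Fin d → Fin (2 * L)) : Fin d → ℝ :=
  fun i => node L ((s i : ℕ) + 1)

def cell (L : ℕ) (s : Fin d → Fin (2 * L)) : Set (Fin d → ℝ) :=
  univ.pi fun i => Ioc (node L (s i : ℕ)) (gridPoint L s i)

lemma monotone_node (L : ℕ) : Monotone fun k : ℕ => node L k := by
  intro a b hab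
  simp only [node]
  gcongr

lemma iUnion_Ioc_node {L : ℕ} (hL : 0 < L) :
    ⋃ k : Fin (2 * L), Ioc (node L (k : ℕ)) (node L ((k : ℕ) + 1)) = Ioc (-π) π := by
  have h := (monotone_node L).biUnion_Ico_Ioc_map_succ 0 (2 * L)
  have h0 : node L ((0 : ℕ) : ℝ) = -π := by simp [node]
  have h2L : node L ((2 * L : ℕ) : ℝ) = π := by
    simp only [node]; push_cast; field_simp; ring
  rw [h0, h2L] at h
  rw [← h]
  ext t
  simp [Fin.exists_iff]

lemma box_eq_iUnion_cell {L : ℕ} (hL : 0 < L) : box d = ⋃ s, cell L s := by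
  simp only [cell, gridPoint]
  rw [iUnion_univ_pi (fun _ (k : Fin (2 * L)) => Ioc (node L (k : ℕ)) (node L ((k : ℕ) + 1))),
    iUnion_Ioc_node hL, box]

lemma pairwise_disjoint_cell (L : ℕ) :
    Pairwise (Disjoint on fun s : Fin d → Fin (2 * L) => cell L s) := by
  intro s t hst
  obtain ⟨i, hi⟩ := Function.ne_iff.mp hst
  have h := (monotone_node L).pairwise_disjoint_on_Ioc_succ (Fin.val_ne_of_ne hi)
  simp only [Order.succ_eq_add_one, Nat.cast_add, Nat.cast_one] at h
  exact disjoint_univ_pi.mpr ⟨i, h⟩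

lemma gridPoint_sub_node (L : ℕ) (s : Fin d → Fin (2 * L)) (i : Fin d) :
    gridPoint L s i - node L (s i : ℕ) = π / L := by
  simp only [gridPoint, node]
  ring

lemma volume_real_cell (L : ℕ) (s : Fin d → Fin (2 * L)) :
    volume.real (cell L s) = (π / L) ^ d := by
  have hside : 0 ≤ π / L := by positivity
  rw [measureReal_def, cell,
    volume_pi_Ioc_toReal fun i => by linarith [gridPoint_sub_node L s i]]
  simp [gridPoint_sub_node, div_pow]

lemma measurableSet_cell (L : ℕ) (s : Fin d → Fin (2 * L)) : MeasurableSet (cell L s) :=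
  MeasurableSet.univ_pi fun _ => measurableSet_Ioc

lemma gridPoint_mem_cell {L : ℕ} (hL : 0 < L) (s : Fin d → Fin (2 * L)) :
    gridPoint L s ∈ cell L s := fun i _ =>
  ⟨by simp only [gridPoint, node]; gcongr; linarith, le_rfl⟩

lemma cell_subset_box {L : ℕ} (hL : 0 < L) (s : Fin d → Fin (2 * L)) : cell L s ⊆ box d :=
  (box_eq_iUnion_cell hL).symm ▸ subset_iUnion _ s

lemma exists_mem_cell {L : ℕ} (hL : 0 < L) {p : Fin d → ℝ} (hp : p ∈ box d) :
    ∃ s, p ∈ cell L s :=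
  mem_iUnion.mp ((box_eq_iUnion_cell hL) ▸ hp)

lemma norm_gridPoint_sub_le {L : ℕ} {s : Fin d → Fin (2 * L)} {p : Fin d → ℝ}
    (hp : p ∈ cell L s) : ‖gridPoint L s - p‖ ≤ π / L := by
  refine (pi_norm_le_iff_of_nonneg (by positivity)).mpr fun i => ?_
  have hi := hp i (mem_univ i)
  rw [Pi.sub_apply, Real.norm_eq_abs, abs_le]
  constructor <;> linarith [hi.1, hi.2, gridPoint_sub_node L s i]

lemma div_le_norm_gridPoint {L : ℕ} {s : Fin d → Fin (2 * L)} (hq : gridPoint L s ≠ 0) :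
    π / L ≤ ‖gridPoint L s‖ := by
  obtain ⟨i, hi⟩ := Function.ne_iff.mp hq
  set n : ℤ := (s i : ℕ) + 1 - L
  have hL : 0 < L := by have := (s i).pos; omega
  have hqi : gridPoint L s i = π / L * n := by
    simp only [gridPoint, node, n]; push_cast; field_simp; ring
  have hn : n ≠ 0 := by
    rintro h
    simp [hqi, h] at hi
  calc π / L = π / L * 1 := (mul_one _).symm
    _ ≤ π / L * |(n : ℝ)| := by gcongr; exact_mod_cast Int.one_le_abs hn
    _ = |gridPoint L s i| := by rw [hqi, abs_mul, abs_of_pos (by positivity : 0 < π / L)]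
    _ ≤ ‖gridPoint L s‖ := by
      simpa only [Real.norm_eq_abs] using norm_le_pi_norm (gridPoint L s) i

instance : IsFiniteMeasure (volume.restrict (box d)) :=
  isFiniteMeasure_restrict.mpr <| by
    rw [box, Real.volume_pi_Ioc]
    exact ENNReal.prod_ne_top fun _ _ => ENNReal.ofReal_ne_top

def stepFun (L : ℕ) (g : (Fin d → ℝ) → ℝ) (p : Fin d → ℝ) : ℝ :=
  ∑ s, (cell L s).indicator (fun _ => g (gridPoint L s)) p

lemma stepFun_eq_of_mem_cell {L : ℕ} (g : (Fin d → ℝ) → ℝ) {s : Fin d → Fin (2 * L)}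
    {p : Fin d → ℝ} (hp : p ∈ cell L s) : stepFun L g p = g (gridPoint L s) := by
  rw [stepFun, Finset.sum_eq_single s (fun t _ hts => indicator_of_notMem
    (disjoint_left.mp (pairwise_disjoint_cell L hts.symm) hp) _) (by simp)]
  exact indicator_of_mem hp _

lemma setIntegral_stepFun {L : ℕ} (hL : 0 < L) (g : (Fin d → ℝ) → ℝ) :
    ∫ p in box d, stepFun L g p = (π / L) ^ d * ∑ s, g (gridPoint L s) := by
  simp only [stepFun]
  rw [integral_finsetSum _ fun s _ =>
    (integrable_const _).indicator (measurableSet_cell L s)]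
  simp only [integral_indicator_const _ (measurableSet_cell L _),
    measureReal_restrict_apply (measurableSet_cell L _), inter_eq_left.mpr (cell_subset_box hL _),
    volume_real_cell, smul_eq_mul, Finset.mul_sum]

lemma measurable_stepFun (L : ℕ) (g : (Fin d → ℝ) → ℝ) : Measurable (stepFun L g) :=
  Finset.measurable_sum _ fun s _ => measurable_const.indicator (measurableSet_cell L s)

lemma integrableOn_inv_norm_sq_box (hd : 3 ≤ d) :
    IntegrableOn (fun p : Fin d → ℝ => (‖p‖ ^ 2)⁻¹) (box d) := by
  have hrank : Module.finrank ℝ (Fin d → ℝ) = d := Module.finrank_fin_fun ℝ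
  have hloc : LocallyIntegrable (fun p : Fin d → ℝ => (‖p‖ ^ 2)⁻¹) volume := by
    refine locallyIntegrable_of_norm_le_rpow (C := 1) (α := 2) (by omega)
      (by rw [hrank]; exact_mod_cast hd) (Eventually.of_forall fun p => ?_)
      (measurable_norm.pow_const 2).inv.aestronglyMeasurable
    rw [one_mul, Real.rpow_neg (norm_nonneg p), Real.norm_eq_abs, abs_inv, abs_pow, abs_norm]
    norm_cast
  exact (hloc.integrableOn_isCompact (isCompact_univ_pi fun _ => isCompact_Icc)).mono_set
    (pi_mono fun _ _ => Ioc_subset_Icc_self)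

lemma abs_stepFun_le {L : ℕ} (hL : 0 < L) {g : (Fin d → ℝ) → ℝ} {C : ℝ} (hg0 : g 0 = 0)
    (hbound : ∀ q ∈ box d, q ≠ 0 → |g q| ≤ C * (‖q‖ ^ 2)⁻¹) {p : Fin d → ℝ}
    (hp : p ∈ box d) (hp0 : p ≠ 0) : |stepFun L g p| ≤ 4 * C * (‖p‖ ^ 2)⁻¹ := by
  have hC : 0 ≤ C :=
    nonneg_of_mul_nonneg_left ((abs_nonneg _).trans (hbound p hp hp0)) (by positivity)
  obtain ⟨s, hs⟩ := exists_mem_cell hL hp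
  rw [stepFun_eq_of_mem_cell g hs]
  set q := gridPoint L s
  by_cases hq : q = 0
  · rw [hq, hg0, abs_zero]
    positivity
  · have hpq : ‖p‖ / 2 ≤ ‖q‖ := by
      have := norm_le_insert' p q
      rw [norm_sub_rev] at this
      linarith [norm_gridPoint_sub_le hs, div_le_norm_gridPoint hq]
    calc |g q| ≤ C * (‖q‖ ^ 2)⁻¹ := hbound q (cell_subset_box hL s (gridPoint_mem_cell hL s)) hq
      _ ≤ C * ((‖p‖ / 2) ^ 2)⁻¹ := by gcongr
      _ = 4 * C * (‖p‖ ^ 2)⁻¹ := by ring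

lemma tendsto_stepFun {g : (Fin d → ℝ) → ℝ} {p : Fin d → ℝ} (hp : p ∈ box d)
    (hg : ContinuousAt g p) : Tendsto (fun L => stepFun L g p) atTop (𝓝 (g p)) := by
  have hnear : ∀ L : ℕ, ∃ q, 0 < L → stepFun L g p = g q ∧ ‖q - p‖ ≤ π / L := fun L => by
    by_cases hL : 0 < L
    · obtain ⟨s, hs⟩ := exists_mem_cell hL hp
      exact ⟨gridPoint L s, fun _ => ⟨stepFun_eq_of_mem_cell g hs, norm_gridPoint_sub_le hs⟩⟩
    · exact ⟨p, fun h => absurd h hL⟩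
  choose q hq using hnear
  have hqp : Tendsto q atTop (𝓝 p) :=
    tendsto_iff_norm_sub_tendsto_zero.mpr <| squeeze_zero'
      (Eventually.of_forall fun _ => norm_nonneg _)
      ((eventually_gt_atTop 0).mono fun L hL => (hq L hL).2)
      (tendsto_const_div_atTop_nhds_zero_nat π)
  exact (hg.tendsto.comp hqp).congr' ((eventually_gt_atTop 0).mono fun L hL => (hq L hL).1.symm)

theorem tendsto_setIntegral_stepFun (hd : 3 ≤ d) {g : (Fin d → ℝ) → ℝ} {C : ℝ} (hg0 : g 0 = 0)
    (hcont : ∀ p ∈ box d, p ≠ 0 → ContinuousAt g p)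
    (hbound : ∀ q ∈ box d, q ≠ 0 → |g q| ≤ C * (‖q‖ ^ 2)⁻¹) :
    Tendsto (fun L => ∫ p in box d, stepFun L g p) atTop (𝓝 (∫ p in box d, g p)) := by
  have : NeZero d := ⟨by omega⟩
  have hae : ∀ᵐ p ∂volume.restrict (box d), p ∈ box d ∧ p ≠ 0 :=
    (ae_restrict_mem (MeasurableSet.univ_pi fun _ => measurableSet_Ioc)).and
      (ae_restrict_of_ae (Measure.ae_ne volume 0))
  refine tendsto_integral_filter_of_dominated_convergence (fun p => 4 * C * (‖p‖ ^ 2)⁻¹)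
    (Eventually.of_forall fun L => (measurable_stepFun L g).aestronglyMeasurable) ?_
    ((integrableOn_inv_norm_sq_box hd).const_mul (4 * C)) ?_
  · filter_upwards [eventually_gt_atTop 0] with L hL
    filter_upwards [hae] with p ⟨hp, hp0⟩
    exact abs_stepFun_le hL hg0 hbound hp hp0
  · filter_upwards [hae] with p ⟨hp, hp0⟩
    exact tendsto_stepFun hp (hcont p hp hp0)

theorem tendsto_brillouinSum (hd : 3 ≤ d) {g : (Fin d → ℝ) → ℝ} {C : ℝ}
    (hcont : ∀ p ∈ box d, p ≠ 0 → ContinuousAt g p)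
    (hbound : ∀ q ∈ box d, q ≠ 0 → |g q| ≤ C * (‖q‖ ^ 2)⁻¹) :
    Tendsto (fun L : ℕ => (2 * (L : ℝ))⁻¹ ^ d *
        ∑ s ∈ Finset.univ.filter (fun s : Fin d → Fin (2 * L) => gridPoint L s ≠ 0),
          g (gridPoint L s))
      atTop (𝓝 ((2 * π)⁻¹ ^ d * ∫ p in box d, g p)) := by
  have : NeZero d := ⟨by omega⟩
  have hlim := tendsto_setIntegral_stepFun hd (g := Function.update g 0 0) (Function.update_self ..)
    (fun p hp hp0 => (continuousAt_update_of_ne hp0).mpr (hcont p hp hp0))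
    (fun q hq hq0 => by rw [Function.update_of_ne hq0]; exact hbound q hq hq0)
  rw [integral_congr_ae (ae_restrict_of_ae ((Measure.ae_ne volume 0).mono
    fun p hp => Function.update_of_ne hp ..))] at hlim
  refine (hlim.const_mul _).congr' ((eventually_gt_atTop 0).mono fun L hL => ?_)
  dsimp only
  rw [setIntegral_stepFun hL, ← mul_assoc, ← mul_pow, Finset.sum_filter]
  congr 1
  · field_simp
  · simp only [Function.update_apply, ite_not]

/-- The `ε(p)` of the statement. -/
def dispersion (p : Fin d → ℝ) : ℝ := ∑ i, (1 - cos (p i))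

lemma continuous_dispersion : Continuous (dispersion (d := d)) := by
  unfold dispersion
  fun_prop

lemma dispersion_nonneg (p : Fin d → ℝ) : 0 ≤ dispersion p :=
  Finset.sum_nonneg fun i _ => sub_nonneg.mpr (cos_le_one (p i))

lemma mul_norm_sq_le_dispersion {q : Fin d → ℝ} (hq : q ∈ box d) :
    2 / π ^ 2 * ‖q‖ ^ 2 ≤ dispersion q := by
  have hcoord : ∀ i, q i ^ 2 ≤ π ^ 2 / 2 * dispersion q := fun i => by
    have hi := hq i (mem_univ i)
    have hcos := cos_le_one_sub_mul_cos_sq (abs_le.mpr ⟨hi.1.le, hi.2⟩)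
    have hterm : 1 - cos (q i) ≤ dispersion q :=
      Finset.single_le_sum (f := fun j => 1 - cos (q j))
        (fun j _ => sub_nonneg.mpr (cos_le_one (q j))) (Finset.mem_univ i)
    calc q i ^ 2 = π ^ 2 / 2 * (2 / π ^ 2 * q i ^ 2) := by field_simp
      _ ≤ π ^ 2 / 2 * dispersion q := by gcongr; linarith
  have hnorm : ‖q‖ ≤ √(π ^ 2 / 2 * dispersion q) :=
    (pi_norm_le_iff_of_nonneg (sqrt_nonneg _)).mpr fun i => by
      simpa only [Real.norm_eq_abs] using abs_le_sqrt (hcoord i)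
  rw [le_sqrt (norm_nonneg q) (mul_nonneg (by positivity) (dispersion_nonneg q))] at hnorm
  calc 2 / π ^ 2 * ‖q‖ ^ 2 ≤ 2 / π ^ 2 * (π ^ 2 / 2 * dispersion q) := by gcongr
    _ = dispersion q := by field_simp

theorem tendsto_brillouinSum_div_dispersion (hd : 3 ≤ d) {φ : (Fin d → ℝ) → ℝ}
    (hφ : Continuous φ) {M : ℝ} (hM : ∀ q, |φ q| ≤ M) :
    Tendsto (fun L : ℕ => (2 * (L : ℝ))⁻¹ ^ d *
        ∑ s ∈ Finset.univ.filter (fun s : Fin d → Fin (2 * L) => gridPoint L s ≠ 0),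
          φ (gridPoint L s) / dispersion (gridPoint L s))
      atTop (𝓝 ((2 * π)⁻¹ ^ d * ∫ p in box d, φ p / dispersion p)) := by
  refine tendsto_brillouinSum hd (C := M * (π ^ 2 / 2)) (fun p hp hp0 => ?_) fun q hq hq0 => ?_
  · have hpos : 0 < 2 / π ^ 2 * ‖p‖ ^ 2 := by positivity
    exact hφ.continuousAt.div continuous_dispersion.continuousAt
      (hpos.trans_le (mul_norm_sq_le_dispersion hp)).ne'
  · have hpos : 0 < 2 / π ^ 2 * ‖q‖ ^ 2 := by positivity
    have hε := mul_norm_sq_le_dispersion hq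
    calc |φ q / dispersion q| = |φ q| / dispersion q := by
          rw [abs_div, abs_of_pos (hpos.trans_le hε)]
      _ ≤ M / (2 / π ^ 2 * ‖q‖ ^ 2) := div_le_div₀ ((abs_nonneg _).trans (hM q)) (hM q) hpos hε
      _ = M * (π ^ 2 / 2) * (‖q‖ ^ 2)⁻¹ := by field_simp

end

end Brillouin

theorem brillouin_sum_tendsto_integral_general (d : ℕ) (hd : 3 ≤ d) (ν J : ℝ)
    (x y : Fin d → ℤ) :
    Filter.Tendsto
      (fun L : ℕ => (2 * (L : ℝ))⁻¹ ^ d *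
        ∑ s ∈ Finset.univ.filter
            (fun s : Fin d → Fin (2 * L) =>
              (fun i => -Real.pi + Real.pi * (((s i : ℕ) : ℝ) + 1) / L) ≠ (0 : Fin d → ℝ)),
          ν / (2 * J * ∑ i, (1 - Real.cos (-Real.pi + Real.pi * (((s i : ℕ) : ℝ) + 1) / L)))
            * Real.cos (∑ i,
                (-Real.pi + Real.pi * (((s i : ℕ) : ℝ) + 1) / L) * ((x i : ℝ) - (y i : ℝ))))
      Filter.atTop
      (nhds ((2 * Real.pi)⁻¹ ^ d *
        ∫ p in Set.univ.pi fun _ : Fin d => Set.Ioc (-Real.pi) Real.pi,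
          ν / (2 * J * ∑ i, (1 - Real.cos (p i))) *
            Real.cos (∑ i, p i * ((x i : ℝ) - (y i : ℝ))))) := by
  have h := Brillouin.tendsto_brillouinSum_div_dispersion hd
    (φ := fun p => ν / (2 * J) * Real.cos (∑ i, p i * ((x i : ℝ) - (y i : ℝ))))
    (by fun_prop) (M := |ν / (2 * J)|) fun p => by
      rw [abs_mul]
      exact mul_le_of_le_one_right (abs_nonneg _) (abs_cos_le_one _)
  have hform : ∀ e c : ℝ, ν / (2 * J * e) * c = ν / (2 * J) * c / e := fun e c => by ring
  simp only [hform]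
  exact h

/-- For `d ≥ 3`, `ν, J > 0` and fixed `x, y ∈ ℤ^d`, the Riemann sums
`(2L)^{-d} ∑_{p ∈ Λ*_L, p ≠ 0} (ν/(2 J ε(p))) cos((p, x-y))` over the Brillouin zone
`Λ*_L = {p : pᵢ = -π + π sᵢ/L, sᵢ ∈ {1,…,2L}}` converge, as `L → ∞`, to
`(2π)^{-d} ∫_{(-π,π]^d} (ν/(2 J ε(p))) cos((p, x-y)) dp`. -/
theorem brillouin_sum_tendsto_integral (d : ℕ) (hd : 3 ≤ d) (ν J : ℝ)
    (hν : 0 < ν) (hJ : 0 < J) (x y : Fin d → ℤ) :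
    Filter.Tendsto
      (fun L : ℕ => (2 * (L : ℝ))⁻¹ ^ d *
        ∑ s ∈ Finset.univ.filter
            (fun s : Fin d → Fin (2 * L) =>
              (fun i => -Real.pi + Real.pi * (((s i : ℕ) : ℝ) + 1) / L) ≠ (0 : Fin d → ℝ)),
          ν / (2 * J * ∑ i, (1 - Real.cos (-Real.pi + Real.pi * (((s i : ℕ) : ℝ) + 1) / L)))
            * Real.cos (∑ i,
                (-Real.pi + Real.pi * (((s i : ℕ) : ℝ) + 1) / L) * ((x i : ℝ) - (y i : ℝ))))
      Filter.atTop
      (nhds ((2 * Real.pi)⁻¹ ^ d *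
        ∫ p in Set.univ.pi fun _ : Fin d => Set.Ioc (-Real.pi) Real.pi,
          ν / (2 * J * ∑ i, (1 - Real.cos (p i))) *
            Real.cos (∑ i, p i * ((x i : ℝ) - (y i : ℝ))))) :=
  brillouin_sum_tendsto_integral_general d hd ν J x y
end
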